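/- Let Σ be a polynomial orbit-finite set, M an orbit-finite monoid, and h : Σ* → M an equivariant monoid homomorphism satisfying condition (*). Then there is an equivariant function f : Σ × Σ → Σ such that for every x, y ∈ Σ, the letter f(x,y) is a letter representation of h(x)·h(y): h(f(x,y)) = h(x)·h(y), and f(x,y) has the same least support as h(x)·h(y). -/

import Mathlib

/-- Atoms: a fixed countably infinite set. -/
abbrev Atom : Type := ℕ

/-- Atom automorphisms: bijections of the atoms. -/
abbrev AtomPerm : Type := Equiv.Perm Atom

/-- `x` (in a set with atoms `X`) is supported by the finite set `A` of atoms. -/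
def SupportedBy {X : Type*} [MulAction AtomPerm X] (A : Finset Atom) (x : X) : Prop :=
  ∀ π : AtomPerm, (∀ a ∈ A, π a = a) → π • x = x

def FinitelySupported {X : Type*} [MulAction AtomPerm X] (x : X) : Prop :=
  ∃ A : Finset Atom, SupportedBy A x

def IsLeastSupport {X : Type*} [MulAction AtomPerm X] (A : Finset Atom) (x : X) : Prop :=
  SupportedBy A x ∧ ∀ B : Finset Atom, SupportedBy B x → A ⊆ B

/-- A function `f : X → Y` is supported by `A` if `f (π • x) = π • f x`
for every `A`-automorphism `π`. -/
def FunSupportedBy {X Y : Type*} [MulAction AtomPerm X] [MulAction AtomPerm Y]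
    (A : Finset Atom) (f : X → Y) : Prop :=
  ∀ π : AtomPerm, (∀ a ∈ A, π a = a) → ∀ x : X, f (π • x) = π • f x

/-- A function is equivariant if it commutes with all atom automorphisms. -/
def FunEquivariant {X Y : Type*} [MulAction AtomPerm X] [MulAction AtomPerm Y]
    (f : X → Y) : Prop :=
  ∀ (π : AtomPerm) (x : X), f (π • x) = π • f x

/-- A subset `S` of a set with atoms is supported by `A`
(as an element of the powerset with the induced action). -/
def SetSupportedBy {Z : Type*} [MulAction AtomPerm Z] (A : Finset Atom) (S : Set Z) : Prop :=
  ∀ π : AtomPerm, (∀ a ∈ A, π a = a) → ∀ z : Z, z ∈ S ↔ π • z ∈ S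

/-- A set with atoms is orbit-finite if every element is finitely supported and, for some
finite set `A` of atoms, it is a union of finitely many orbits of the group of
`A`-automorphisms. -/
def OrbitFinite (X : Type*) [MulAction AtomPerm X] : Prop :=
  (∀ x : X, FinitelySupported x) ∧
  ∃ (A : Finset Atom) (reps : Finset X),
    ∀ x : X, ∃ r ∈ reps, ∃ π : AtomPerm, (∀ a ∈ A, π a = a) ∧ π • r = x

/-- The multiplication of a monoid with atoms is finitely supported. -/
def MulFinitelySupported (M : Type*) [Monoid M] [MulAction AtomPerm M] : Prop :=
  ∃ A : Finset Atom, ∀ π : AtomPerm, (∀ a ∈ A, π a = a) →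
    ∀ x y : M, π • (x * y) = (π • x) * (π • y)

/-- An orbit-finite monoid: the underlying set is orbit-finite and
multiplication is finitely supported. -/
def OrbitFiniteMonoid (M : Type*) [Monoid M] [MulAction AtomPerm M] : Prop :=
  OrbitFinite M ∧ MulFinitelySupported M

/-- `x` is an infix of `y`. -/
def MInfix {M : Type*} [Monoid M] (x y : M) : Prop := ∃ a b : M, y = a * x * b

/-- `x` is a prefix of `y`. -/
def MPrefix {M : Type*} [Monoid M] (x y : M) : Prop := ∃ a : M, y = x * a

/-- `x` is a suffix of `y`. -/
def MSuffix {M : Type*} [Monoid M] (x y : M) : Prop := ∃ a : M, y = a * x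

def JEquiv {M : Type*} [Monoid M] (x y : M) : Prop := MInfix x y ∧ MInfix y x
def REquiv {M : Type*} [Monoid M] (x y : M) : Prop := MPrefix x y ∧ MPrefix y x
def LEquiv {M : Type*} [Monoid M] (x y : M) : Prop := MSuffix x y ∧ MSuffix y x

/-- A sequence of monoid elements is smooth if every element of the sequence can be
recovered from the product of the whole sequence by multiplying on both sides. -/
def SmoothSeq {M : Type*} [Monoid M] (l : List M) : Prop :=
  ∀ x ∈ l, ∃ y z : M, y * l.prod * z = x

/-- Codes for polynomial orbit-finite sets: built from the atoms and singleton sets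
by finite products and coproducts. -/
inductive PolyCode : Type where
  | atom : PolyCode
  | unit : PolyCode
  | prod : PolyCode → PolyCode → PolyCode
  | sum : PolyCode → PolyCode → PolyCode

/-- The polynomial orbit-finite set described by a code. -/
def PolyCode.interp : PolyCode → Type
  | .atom => Atom
  | .unit => Unit
  | .prod c d => c.interp × d.interp
  | .sum c d => c.interp ⊕ d.interp

/-- The componentwise action of atom automorphisms on a polynomial orbit-finite set. -/
def PolyCode.act (π : AtomPerm) : (c : PolyCode) → c.interp → c.interp
  | .atom, a => π a
  | .unit, u => u
  | .prod c d, p => (c.act π p.1, d.act π p.2)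
  | .sum c d, x => x.elim (fun a => Sum.inl (c.act π a)) (fun b => Sum.inr (d.act π b))

theorem PolyCode.act_one : ∀ (c : PolyCode) (x : c.interp), c.act 1 x = x
  | .atom, a => rfl
  | .unit, _ => rfl
  | .prod c d, p => by
      simp only [PolyCode.act, PolyCode.act_one c p.1, PolyCode.act_one d p.2, Prod.mk.eta]; rfl
  | .sum c d, x => by
      cases x with
      | inl a => simp only [PolyCode.act, Sum.elim_inl, PolyCode.act_one c a]; exact congrArg Sum.inl (PolyCode.act_one c a)
      | inr b => simp only [PolyCode.act, Sum.elim_inr, PolyCode.act_one d b]; exact congrArg Sum.inr (PolyCode.act_one d b)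

theorem PolyCode.act_mul (π σ : AtomPerm) :
    ∀ (c : PolyCode) (x : c.interp), c.act (π * σ) x = c.act π (c.act σ x)
  | .atom, a => rfl
  | .unit, _ => rfl
  | .prod c d, p => by
      simp only [PolyCode.act, PolyCode.act_mul π σ c p.1, PolyCode.act_mul π σ d p.2]; rfl
  | .sum c d, x => by
      cases x with
      | inl a => simp only [PolyCode.act, Sum.elim_inl, PolyCode.act_mul π σ c a]; exact congrArg Sum.inl (PolyCode.act_mul π σ c a)
      | inr b => simp only [PolyCode.act, Sum.elim_inr, PolyCode.act_mul π σ d b]; exact congrArg Sum.inr (PolyCode.act_mul π σ d b)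

instance (c : PolyCode) : MulAction AtomPerm c.interp where
  smul π x := c.act π x
  one_smul x := c.act_one x
  mul_smul π σ x := c.act_mul π σ x

/-- `h : Σ* → M` is a monoid homomorphism from the free monoid of strings over `Σ`. -/
def IsListHom {X M : Type*} [Monoid M] (h : List X → M) : Prop :=
  h [] = 1 ∧ ∀ u v : List X, h (u ++ v) = h u * h v

/-- Equivariance of a function on strings, with the letterwise action on strings. -/
def ListHomEquivariant {X M : Type*} [MulAction AtomPerm X] [Monoid M] [MulAction AtomPerm M]
    (h : List X → M) : Prop :=
  ∀ (π : AtomPerm) (l : List X), h (l.map fun x => π • x) = π • h l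

/-- Condition (*): every monoid element has a letter representation, i.e. a letter with the
same image under `h` and the same least support. -/
def StarCondition (c : PolyCode) {M : Type*} [Monoid M] [MulAction AtomPerm M]
    (h : List c.interp → M) : Prop :=
  ∀ m : M, ∃ a : c.interp, h [a] = m ∧
    ∃ A : Finset Atom, IsLeastSupport A a ∧ IsLeastSupport A m

/-!
Choose a letter representation of `h [x, y]` for one pair in each orbit of `Σ × Σ` and transport
it along the orbit. This is well defined because an automorphism fixing a pair in a polynomial
set fixes every atom occurring in it, the least support of `h [x, y]` consists of such atoms, and
a letter is fixed by every automorphism fixing its least support.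
-/

namespace PolyCode

def atoms : (c : PolyCode) → c.interp → Finset Atom
  | .atom, a => {a}
  | .unit, _ => ∅
  | .prod c d, p => c.atoms p.1 ∪ d.atoms p.2
  | .sum c d, x => x.elim c.atoms d.atoms

theorem smul_eq_self_iff (π : AtomPerm) :
    ∀ (c : PolyCode) (x : c.interp), π • x = x ↔ ∀ a ∈ c.atoms x, π a = a
  | .atom, (a : Atom) => by
    show π a = a ↔ ∀ b ∈ ({a} : Finset Atom), π b = b
    simp
  | .unit, _ => iff_of_true rfl fun a ha => absurd ha (Finset.notMem_empty a)
  | .prod c d, (x, y) => by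
    show (π • x, π • y) = (x, y) ↔ ∀ a ∈ c.atoms x ∪ d.atoms y, π a = a
    simp only [Prod.mk.injEq, smul_eq_self_iff π c x, smul_eq_self_iff π d y, Finset.mem_union,
      or_imp, forall_and]
  | .sum c d, .inl x => by
    show Sum.inl (π • x) = Sum.inl x ↔ ∀ a ∈ c.atoms x, π a = a
    rw [Sum.inl.injEq, smul_eq_self_iff π c x]
  | .sum c d, .inr y => by
    show Sum.inr (π • y) = Sum.inr y ↔ ∀ a ∈ d.atoms y, π a = a
    rw [Sum.inr.injEq, smul_eq_self_iff π d y]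

theorem supportedBy_atoms (c : PolyCode) (x : c.interp) : SupportedBy (c.atoms x) x :=
  fun π => (c.smul_eq_self_iff π x).2

theorem stabilizer_le_of_supportedBy {X : Type*} [MulAction AtomPerm X] (c : PolyCode)
    {x : c.interp} {A : Finset Atom} {y : X} (hy : SupportedBy A y) (hA : A ⊆ c.atoms x) :
    MulAction.stabilizer AtomPerm x ≤ MulAction.stabilizer AtomPerm y :=
  fun π hπ => hy π fun a ha => (c.smul_eq_self_iff π x).1 hπ a (hA ha)

end PolyCode

theorem SupportedBy.map {X Y : Type*} [MulAction AtomPerm X] [MulAction AtomPerm Y]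
    {F : X → Y} (hF : FunEquivariant F) {A : Finset Atom} {x : X} (hx : SupportedBy A x) :
    SupportedBy A (F x) :=
  fun π hπ => by rw [← hF, hx π hπ]

theorem SupportedBy.smul {X : Type*} [MulAction AtomPerm X] {A : Finset Atom} {x : X}
    (hA : SupportedBy A x) (π : AtomPerm) : SupportedBy (A.image π) (π • x) := by
  intro σ hσ
  have hconj : (π⁻¹ * σ * π) • x = x := hA _ fun a ha => by
    simp [Equiv.Perm.mul_apply, hσ (π a) (Finset.mem_image_of_mem π ha)]
  rwa [mul_smul, mul_smul, inv_smul_eq_iff] at hconj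

theorem IsLeastSupport.smul {X : Type*} [MulAction AtomPerm X] {A : Finset Atom} {x : X}
    (hA : IsLeastSupport A x) (π : AtomPerm) : IsLeastSupport (A.image π) (π • x) := by
  refine ⟨hA.1.smul π, fun B hB => Finset.image_subset_iff.2 fun a ha => ?_⟩
  have hsub : A ⊆ B.image ⇑π⁻¹ := hA.2 _ (by simpa using hB.smul π⁻¹)
  obtain ⟨b, hb, rfl⟩ := Finset.mem_image.1 (hsub ha)
  simpa using hb

open MulAction in
theorem exists_equivariant_of_forall_exists_stabilizer_le {G X Y : Type*} [Group G]
    [MulAction G X] [MulAction G Y] (P : X → Y → Prop)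
    (hP : ∀ (g : G) x y, P x y → P (g • x) (g • y))
    (hex : ∀ x, ∃ y, P x y ∧ stabilizer G x ≤ stabilizer G y) :
    ∃ f : X → Y, (∀ (g : G) x, f (g • x) = g • f x) ∧ ∀ x, P x (f x) := by
  choose y hPy hstab using hex
  let rep (x : X) : X := (⟦x⟧ : orbitRel.Quotient G X).out
  have rep_smul (g : G) (x : X) : rep (g • x) = rep x := by
    simp only [rep, orbitRel.Quotient.quotient_smul_eq]
  have mem_orbit_rep (x : X) : x ∈ orbit G (rep x) :=
    mem_orbit_symm.mp (Quotient.mk_out (s := orbitRel G X) x)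
  choose k hk using fun x => mem_orbit_iff.mp (mem_orbit_rep x)
  have transport (x : X) (g : G) (hg : g • rep x = x) : k x • y (rep x) = g • y (rep x) := by
    have : g⁻¹ * k x ∈ stabilizer G (rep x) := by
      rw [mem_stabilizer_iff, mul_smul, hk, inv_smul_eq_iff, hg]
    rw [← inv_smul_eq_iff, ← mul_smul]
    exact hstab _ this
  refine ⟨fun x => k x • y (rep x), fun g x => ?_, fun x => ?_⟩
  · simp only
    rw [transport (g • x) (g * k x) (by rw [mul_smul, rep_smul, hk]), rep_smul, mul_smul]
  · simpa only [hk] using hP (k x) _ _ (hPy (rep x))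

theorem letter_representation_of_product_general (c : PolyCode)
    {M : Type*} [Monoid M] [MulAction AtomPerm M]
    (h : List c.interp → M) (hHom : IsListHom h) (hEqv : ListHomEquivariant h)
    (hStar : StarCondition c h) :
    ∃ f : c.interp × c.interp → c.interp,
      FunEquivariant f ∧
      ∀ x y : c.interp,
        h [f (x, y)] = h [x] * h [y] ∧
        ∃ A : Finset Atom, IsLeastSupport A (f (x, y)) ∧
          IsLeastSupport A (h [x] * h [y]) := by
  have hPair : FunEquivariant fun w : c.interp × c.interp => h [w.1, w.2] :=
    fun π w => hEqv π [w.1, w.2]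
  let IsRep (w : c.interp × c.interp) (a : c.interp) : Prop :=
    h [a] = h [w.1, w.2] ∧ ∃ A, IsLeastSupport A a ∧ IsLeastSupport A (h [w.1, w.2])
  have isRep_smul (π : AtomPerm) w a (ha : IsRep w a) : IsRep (π • w) (π • a) := by
    obtain ⟨hha, A, hAa, hAw⟩ := ha
    have hw : h [(π • w).1, (π • w).2] = π • h [w.1, w.2] := hPair π w
    refine ⟨?_, A.image π, hAa.smul π, hw ▸ hAw.smul π⟩
    rw [hw, ← hha]
    exact hEqv π [a]
  have exists_isRep w : ∃ a, IsRep w a ∧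
      MulAction.stabilizer AtomPerm w ≤ MulAction.stabilizer AtomPerm a := by
    obtain ⟨a, ha, A, hAa, hAw⟩ := hStar (h [w.1, w.2])
    -- a pair of letters is itself an element of the polynomial set `c.prod c`
    have hsub : A ⊆ (c.prod c).atoms w := hAw.2 _ (((c.prod c).supportedBy_atoms w).map hPair)
    exact ⟨a, ⟨ha, A, hAa, hAw⟩, (c.prod c).stabilizer_le_of_supportedBy hAa.1 hsub⟩
  obtain ⟨f, hf, hfRep⟩ :=
    exists_equivariant_of_forall_exists_stabilizer_le IsRep isRep_smul exists_isRep
  refine ⟨f, hf, fun x y => ?_⟩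
  rw [← hHom.2 [x] [y]]
  exact hfRep (x, y)

/-- For an equivariant homomorphism `h : Σ* → M` into an orbit-finite monoid satisfying
condition (*), there is an equivariant function `f : Σ × Σ → Σ` such that `f(x,y)` is a
letter representation of `h(x)·h(y)`. -/
theorem letter_representation_of_product (c : PolyCode)
    {M : Type*} [Monoid M] [MulAction AtomPerm M] (hM : OrbitFiniteMonoid M)
    (h : List c.interp → M) (hHom : IsListHom h) (hEqv : ListHomEquivariant h)
    (hStar : StarCondition c h) :
    ∃ f : c.interp × c.interp → c.interp,
      FunEquivariant f ∧
      ∀ x y : c.interp,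
        h [f (x, y)] = h [x] * h [y] ∧
        ∃ A : Finset Atom, IsLeastSupport A (f (x, y)) ∧
          IsLeastSupport A (h [x] * h [y]) :=
  letter_representation_of_product_general c h hHom hEqv hStar
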